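/- Let X be any n×p real matrix and let R satisfy 1 ≤ R ≤ min(n,p) and R < p. For the right singular subspace function V_R of the standard SVD (with any fixed selection of singular vectors when they are not unique), there exists l ≤ R+1 such that (1,l) ∈ BP(V_R;X). In particular, bp_row(V_R;X) = 1 and bp_col(V_R;X) ≤ R+1. -/

import Mathlib

/-!
Corrupt one row of `X` on `R + 1` columns by a rank-one spike `Z = X + t eᵢ yᵀ`, where `y` is a
unit vector orthogonal to `V_R(X)` supported on those columns; it exists because
`dim V_R(X) = R < R + 1`. Since `Z` agrees with `X` on `yᗮ`, the top singular value `σ₁` of `Z`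
is at least `t - ‖X‖` and its top right singular vector `u` satisfies
`σ₁ ‖u - ⟪y, u⟫ y‖ ≤ ‖X‖`, so `u` is almost orthogonal to `V_R(X)`. A unit vector `x ∈ V_R(X)`
orthogonal to the `(R - 1)`-dimensional space `V_R(Z) ⊓ uᗮ` projects onto `V_R(Z)` with length
`|⟪u, x⟫| ≤ ‖P_{V_R(X)} u‖`, so the canonical angle tends to `π / 2` as `t → ∞`. Corrupting no
column changes nothing, so the least `l` with breakdown at `(1, l)` lies between `1` and `R + 1`.
-/

noncomputable section
open scoped BigOperators
open Matrix

abbrev E (k : ℕ) := EuclideanSpace ℝ (Fin k)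

noncomputable def canonAngle {k : ℕ} (V W : Submodule ℝ (E k)) : ℝ :=
  Real.arccos (sInf {r : ℝ | ∃ w ∈ W, ‖w‖ = 1 ∧
    r = ‖(V.orthogonalProjection w : E k)‖})

variable {n p m : ℕ}

def BlockCorrupt (X Z : Matrix (Fin n) (Fin p) ℝ) (k l : ℕ) : Prop :=
  ∃ (I : Finset (Fin n)) (J : Finset (Fin p)), I.card = k ∧ J.card = l ∧
    ∀ i j, (i ∉ I ∨ j ∉ J) → Z i j = X i j

def RowCorrupt (X Z : Matrix (Fin n) (Fin p) ℝ) (k : ℕ) : Prop :=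
  ∃ I : Finset (Fin n), I.card = k ∧ ∀ i ∉ I, ∀ j, Z i j = X i j

def ColCorrupt (X Z : Matrix (Fin n) (Fin p) ℝ) (l : ℕ) : Prop :=
  ∃ J : Finset (Fin p), J.card = l ∧ ∀ j ∉ J, ∀ i, Z i j = X i j

def BreaksDownBlock (V : Matrix (Fin n) (Fin p) ℝ → Submodule ℝ (E m))
    (X : Matrix (Fin n) (Fin p) ℝ) (k l : ℕ) : Prop :=
  sSup {d : ℝ | ∃ Z, BlockCorrupt X Z k l ∧ d = canonAngle (V Z) (V X)} = Real.pi / 2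

def BreaksDownRow (V : Matrix (Fin n) (Fin p) ℝ → Submodule ℝ (E m))
    (X : Matrix (Fin n) (Fin p) ℝ) (k : ℕ) : Prop :=
  sSup {d : ℝ | ∃ Z, RowCorrupt X Z k ∧ d = canonAngle (V Z) (V X)} = Real.pi / 2

def BreaksDownCol (V : Matrix (Fin n) (Fin p) ℝ → Submodule ℝ (E m))
    (X : Matrix (Fin n) (Fin p) ℝ) (l : ℕ) : Prop :=
  sSup {d : ℝ | ∃ Z, ColCorrupt X Z l ∧ d = canonAngle (V Z) (V X)} = Real.pi / 2

noncomputable def bpRow (V : Matrix (Fin n) (Fin p) ℝ → Submodule ℝ (E m))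
    (X : Matrix (Fin n) (Fin p) ℝ) : ℕ :=
  sInf {k : ℕ | 1 ≤ k ∧ k ≤ n ∧ BreaksDownRow V X k}

noncomputable def bpCol (V : Matrix (Fin n) (Fin p) ℝ → Submodule ℝ (E m))
    (X : Matrix (Fin n) (Fin p) ℝ) : ℕ :=
  sInf {l : ℕ | 1 ≤ l ∧ l ≤ p ∧ BreaksDownCol V X l}

def IsBP (V : Matrix (Fin n) (Fin p) ℝ → Submodule ℝ (E m))
    (X : Matrix (Fin n) (Fin p) ℝ) (i j : ℕ) : Prop :=
  1 ≤ i ∧ i ≤ n ∧ 1 ≤ j ∧ j ≤ p ∧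
  (∀ k l, i ≤ k → k ≤ n → j ≤ l → l ≤ p → BreaksDownBlock V X k l) ∧
  (∀ k l, 1 ≤ k → 1 ≤ l → k ≤ i → l ≤ j → (k, l) ≠ (i, j) → ¬ BreaksDownBlock V X k l)

/-- A full orthonormal system of left singular vectors of `Y` (eigenvectors of `Y Yᵀ`)
with singular values `σ` arranged in decreasing order. -/
def IsLeftSingularSystem {n p : ℕ} (Y : Matrix (Fin n) (Fin p) ℝ)
    (u : Fin n → E n) (σ : Fin n → ℝ) : Prop :=
  Orthonormal ℝ u ∧ (∀ i, 0 ≤ σ i) ∧ (∀ i j : Fin n, i ≤ j → σ j ≤ σ i) ∧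
  ∀ i, Matrix.toEuclideanLin (Y * Yᵀ) (u i) = ((σ i) ^ 2) • u i

/-- A full orthonormal system of right singular vectors of `Y` (eigenvectors of `Yᵀ Y`)
with singular values `σ` arranged in decreasing order. -/
def IsRightSingularSystem {n p : ℕ} (Y : Matrix (Fin n) (Fin p) ℝ)
    (v : Fin p → E p) (σ : Fin p → ℝ) : Prop :=
  Orthonormal ℝ v ∧ (∀ j, 0 ≤ σ j) ∧ (∀ i j : Fin p, i ≤ j → σ j ≤ σ i) ∧
  ∀ j, Matrix.toEuclideanLin (Yᵀ * Y) (v j) = ((σ j) ^ 2) • v j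

/-- `S` is an `R`-dimensional subspace of `ℝⁿ` spanned by left singular vectors of `Y`
corresponding to its `R` largest singular values. -/
def IsLeftSingularSubspace {n p : ℕ} (Y : Matrix (Fin n) (Fin p) ℝ) (R : ℕ)
    (S : Submodule ℝ (E n)) : Prop :=
  ∃ (u : Fin n → E n) (σ : Fin n → ℝ), IsLeftSingularSystem Y u σ ∧
    S = Submodule.span ℝ {x | ∃ i : Fin n, (i : ℕ) < R ∧ x = u i}

/-- `S` is an `R`-dimensional subspace of `ℝᵖ` spanned by right singular vectors of `Y`
corresponding to its `R` largest singular values. -/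
def IsRightSingularSubspace {n p : ℕ} (Y : Matrix (Fin n) (Fin p) ℝ) (R : ℕ)
    (S : Submodule ℝ (E p)) : Prop :=
  ∃ (v : Fin p → E p) (σ : Fin p → ℝ), IsRightSingularSystem Y v σ ∧
    S = Submodule.span ℝ {x | ∃ j : Fin p, (j : ℕ) < R ∧ x = v j}

open RealInnerProductSpace
open scoped Topology

section Projection

variable {F : Type*} [NormedAddCommGroup F] [InnerProductSpace ℝ F] [FiniteDimensional ℝ F]

lemma Submodule.exists_unit_mem_inf_orthogonal {U W : Submodule ℝ F}
    (h : Module.finrank ℝ U < Module.finrank ℝ W) :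
    ∃ x ∈ W, x ∈ Uᗮ ∧ ‖x‖ = 1 := by
  have hne : W ⊓ Uᗮ ≠ ⊥ := by
    intro hbot
    have hsum := Submodule.finrank_sup_add_finrank_inf_eq W Uᗮ
    have hcompl := U.finrank_add_finrank_orthogonal
    have hsup := (W ⊔ Uᗮ).finrank_le
    rw [hbot, finrank_bot] at hsum
    omega
  obtain ⟨x, ⟨hxW, hxU⟩, hx0⟩ := Submodule.exists_mem_ne_zero_of_ne_bot hne
  refine ⟨‖x‖⁻¹ • x, W.smul_mem _ hxW, Uᗮ.smul_mem _ hxU, ?_⟩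
  rw [norm_smul, norm_inv, norm_norm, inv_mul_cancel₀ (norm_ne_zero_iff.mpr hx0)]

lemma Submodule.starProjection_eq_inner_smul {S : Submodule ℝ F} {u x : F} (hu : u ∈ S)
    (hu1 : ‖u‖ = 1) (hx : x ∈ (S ⊓ (ℝ ∙ u)ᗮ)ᗮ) : S.starProjection x = ⟪u, x⟫ • u := by
  refine S.eq_starProjection_of_mem_of_inner_eq_zero (S.smul_mem _ hu) fun z hz => ?_
  have hz' : z - ⟪u, z⟫ • u ∈ S ⊓ (ℝ ∙ u)ᗮ := by
    refine Submodule.mem_inf.mpr ⟨S.sub_mem hz (S.smul_mem _ hu), ?_⟩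
    rw [Submodule.mem_orthogonal_singleton_iff_inner_right, inner_sub_right,
      real_inner_smul_right, real_inner_self_eq_norm_sq, hu1]
    ring
  have hxz := (Submodule.mem_orthogonal' _ _).1 hx _ hz'
  rw [inner_sub_right, real_inner_smul_right] at hxz
  rw [inner_sub_left, real_inner_smul_left, real_inner_comm x u]
  linarith

lemma Submodule.exists_unit_norm_starProjection_le {S T : Submodule ℝ F}
    (hST : Module.finrank ℝ S ≤ Module.finrank ℝ T) {u : F} (hu : u ∈ S) (hu1 : ‖u‖ = 1) :
    ∃ x ∈ T, ‖x‖ = 1 ∧ ‖S.starProjection x‖ ≤ ‖T.starProjection u‖ := by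
  have hlt : S ⊓ (ℝ ∙ u)ᗮ < S := by
    refine lt_of_le_of_ne inf_le_left fun heq => ?_
    have : u ∈ (ℝ ∙ u)ᗮ := (heq.symm ▸ hu : u ∈ S ⊓ (ℝ ∙ u)ᗮ).2
    rw [Submodule.mem_orthogonal_singleton_iff_inner_right, real_inner_self_eq_norm_sq,
      hu1] at this
    norm_num at this
  obtain ⟨x, hxT, hxU, hx1⟩ := Submodule.exists_unit_mem_inf_orthogonal
    ((Submodule.finrank_lt_finrank_of_lt hlt).trans_le hST)
  refine ⟨x, hxT, hx1, ?_⟩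
  rw [S.starProjection_eq_inner_smul hu hu1 hxU, norm_smul, hu1, mul_one, Real.norm_eq_abs,
    ← T.starProjection_eq_self_iff.mpr hxT, ← T.inner_starProjection_left_eq_right]
  simpa [hx1] using abs_real_inner_le_norm (T.starProjection u) x

end Projection

lemma inner_toEuclideanLin_transpose_mul_self (Z : Matrix (Fin n) (Fin p) ℝ) (a b : E p) :
    ⟪a, toEuclideanLin (Zᵀ * Z) b⟫ = ⟪toEuclideanLin Z a, toEuclideanLin Z b⟫ := by
  rw [Matrix.toLpLin_mul_same, LinearMap.comp_apply, ← Matrix.conjTranspose_eq_transpose_of_trivial,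
    Matrix.toEuclideanLin_conjTranspose_eq_adjoint, LinearMap.adjoint_inner_right]

lemma toEuclideanLin_add_vecMulVec_single (X : Matrix (Fin n) (Fin p) ℝ) (i : Fin n) (t : ℝ)
    (y x : E p) :
    toEuclideanLin (X + vecMulVec (Pi.single i t) y.ofLp) x
      = toEuclideanLin X x + (t * ⟪y, x⟫) • EuclideanSpace.single i 1 := by
  ext k
  simp [Matrix.vecMulVec_mulVec, Pi.single_apply, PiLp.inner_apply, dotProduct, mul_comm]

lemma IsRightSingularSystem.norm_toEuclideanLin_le {Z : Matrix (Fin n) (Fin p) ℝ}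
    {v : Fin p → E p} {σ : Fin p → ℝ} (hsys : IsRightSingularSystem Z v σ) (hp : 0 < p)
    (x : E p) : ‖toEuclideanLin Z x‖ ≤ σ ⟨0, hp⟩ * ‖x‖ := by
  obtain ⟨hv, hσ0, hσmono, heig⟩ := hsys
  have : Nonempty (Fin p) := ⟨⟨0, hp⟩⟩
  let b : OrthonormalBasis (Fin p) ℝ (E p) := OrthonormalBasis.mk hv
    (hv.linearIndependent.span_eq_top_of_card_eq_finrank (by simp)).ge
  have hb : ⇑b = v := OrthonormalBasis.coe_mk hv _
  have hexpand : ‖toEuclideanLin Z x‖ ^ 2 = ∑ j, σ j ^ 2 * ⟪v j, x⟫ ^ 2 := by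
    rw [← real_inner_self_eq_norm_sq, ← inner_toEuclideanLin_transpose_mul_self,
      ← b.sum_inner_mul_inner]
    refine Finset.sum_congr rfl fun j _ => ?_
    rw [inner_toEuclideanLin_transpose_mul_self, real_inner_comm (toEuclideanLin Z x),
      ← inner_toEuclideanLin_transpose_mul_self, hb, heig, real_inner_smul_right,
      real_inner_comm x]
    ring
  have hparseval : ∑ j, ⟪v j, x⟫ ^ 2 = ‖x‖ ^ 2 := by
    rw [← real_inner_self_eq_norm_sq, ← b.sum_inner_mul_inner, hb]
    exact Finset.sum_congr rfl fun j _ => by rw [real_inner_comm x]; ring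
  have hle : ∑ j, σ j ^ 2 * ⟪v j, x⟫ ^ 2 ≤ σ ⟨0, hp⟩ ^ 2 * ‖x‖ ^ 2 := by
    rw [← hparseval, Finset.mul_sum]
    refine Finset.sum_le_sum fun j _ => mul_le_mul_of_nonneg_right ?_ (sq_nonneg _)
    exact pow_le_pow_left₀ (hσ0 j) (hσmono _ j (Nat.zero_le _)) 2
  rw [← hexpand, ← mul_pow] at hle
  exact (sq_le_sq₀ (norm_nonneg _) (mul_nonneg (hσ0 _) (norm_nonneg _))).mp hle

lemma IsRightSingularSubspace.finrank_eq {Y : Matrix (Fin n) (Fin p) ℝ} {R : ℕ}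
    {S : Submodule ℝ (E p)} (hS : IsRightSingularSubspace Y R S) (hR : R ≤ p) :
    Module.finrank ℝ S = R := by
  obtain ⟨v, σ, hsys, rfl⟩ := hS
  have hset : {x | ∃ j : Fin p, (j : ℕ) < R ∧ x = v j} = Set.range (v ∘ Fin.castLE hR) := by
    ext x
    constructor
    · rintro ⟨j, hj, rfl⟩
      exact ⟨⟨j, hj⟩, rfl⟩
    · rintro ⟨j, rfl⟩
      exact ⟨Fin.castLE hR j, j.isLt, rfl⟩
  rw [hset, finrank_span_eq_card ((hsys.1.comp _ (Fin.castLE_injective hR)).linearIndependent),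
    Fintype.card_fin]

lemma norm_mul_norm_sub_inner_smul_le_of_eigenvector {X Z : Matrix (Fin n) (Fin p) ℝ}
    {y u : E p} {σ C : ℝ} (hy : ‖y‖ = 1) (hu : ‖u‖ = 1) (hσ : 0 ≤ σ)
    (heig : toEuclideanLin (Zᵀ * Z) u = σ ^ 2 • u)
    (hZX : ∀ w, ⟪y, w⟫ = 0 → toEuclideanLin Z w = toEuclideanLin X w)
    (hC : ∀ x, ‖toEuclideanLin X x‖ ≤ C * ‖x‖) : σ * ‖u - ⟪y, u⟫ • y‖ ≤ C := by
  set w := u - ⟪y, u⟫ • y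
  have hyw : ⟪y, w⟫ = 0 := by
    rw [inner_sub_right, real_inner_smul_right, real_inner_self_eq_norm_sq, hy]
    ring
  have hwu : ⟪w, u⟫ = ‖w‖ ^ 2 := by
    rw [← real_inner_self_eq_norm_sq, (sub_add_cancel u (⟪y, u⟫ • y)).symm, inner_add_right,
      real_inner_smul_right, real_inner_comm y, hyw]
    ring
  have hZu : ‖toEuclideanLin Z u‖ = σ := by
    rw [← sq_eq_sq₀ (norm_nonneg _) hσ, ← real_inner_self_eq_norm_sq,
      ← inner_toEuclideanLin_transpose_mul_self, heig, real_inner_smul_right,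
      real_inner_self_eq_norm_sq, hu]
    ring
  have hC0 : 0 ≤ C := by simpa [hy] using (norm_nonneg _).trans (hC y)
  have hquad : (σ * ‖w‖) ^ 2 ≤ C * (σ * ‖w‖) := calc
    (σ * ‖w‖) ^ 2 = ⟪w, toEuclideanLin (Zᵀ * Z) u⟫ := by
      rw [heig, real_inner_smul_right, hwu]; ring
    _ = ⟪toEuclideanLin X w, toEuclideanLin Z u⟫ := by
      rw [inner_toEuclideanLin_transpose_mul_self, hZX w hyw]
    _ ≤ ‖toEuclideanLin X w‖ * ‖toEuclideanLin Z u‖ := real_inner_le_norm _ _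
    _ ≤ C * ‖w‖ * σ := by rw [hZu]; exact mul_le_mul_of_nonneg_right (hC w) hσ
    _ = C * (σ * ‖w‖) := by ring
  nlinarith [mul_nonneg hσ (norm_nonneg w)]

lemma IsRightSingularSystem.norm_mul_norm_sub_inner_smul_le {X Z : Matrix (Fin n) (Fin p) ℝ}
    {v : Fin p → E p} {σ : Fin p → ℝ} (hsys : IsRightSingularSystem Z v σ) (hp : 0 < p)
    {y : E p} {C : ℝ} (hy : ‖y‖ = 1)
    (hZX : ∀ w, ⟪y, w⟫ = 0 → toEuclideanLin Z w = toEuclideanLin X w)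
    (hC : ∀ x, ‖toEuclideanLin X x‖ ≤ C * ‖x‖) :
    ‖toEuclideanLin Z y‖ * ‖v ⟨0, hp⟩ - ⟪y, v ⟨0, hp⟩⟫ • y‖ ≤ C := by
  have hσy : ‖toEuclideanLin Z y‖ ≤ σ ⟨0, hp⟩ := by
    simpa [hy] using hsys.norm_toEuclideanLin_le hp y
  refine le_trans (mul_le_mul_of_nonneg_right hσy (norm_nonneg _)) ?_
  exact norm_mul_norm_sub_inner_smul_le_of_eigenvector hy (hsys.1.1 _) (hsys.2.1 _)
    (hsys.2.2.2 _) hZX hC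

lemma IsRightSingularSystem.norm_sub_inner_smul_le_of_add_vecMulVec
    {X : Matrix (Fin n) (Fin p) ℝ} {i : Fin n} {y : E p} {C ε : ℝ} {v : Fin p → E p}
    {σ : Fin p → ℝ}
    (hsys : IsRightSingularSystem (X + vecMulVec (Pi.single i (C + C / ε)) y.ofLp) v σ)
    (hp : 0 < p) (hy : ‖y‖ = 1) (hC0 : 0 < C) (hC : ∀ x, ‖toEuclideanLin X x‖ ≤ C * ‖x‖)
    (hε : 0 < ε) : ‖v ⟨0, hp⟩ - ⟪y, v ⟨0, hp⟩⟫ • y‖ ≤ ε := by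
  set Z := X + vecMulVec (Pi.single i (C + C / ε)) y.ofLp
  -- the spike height `C + C / ε` exceeds `‖X y‖ ≤ C` by `C / ε`, so `σ₁ ≥ C / ε`
  have hZ := toEuclideanLin_add_vecMulVec_single X i (C + C / ε) y
  have hZy : C / ε ≤ ‖toEuclideanLin Z y‖ := by
    have hspike : ‖toEuclideanLin Z y - toEuclideanLin X y‖ = C + C / ε := by
      rw [hZ, add_sub_cancel_left, real_inner_self_eq_norm_sq, hy, norm_smul, PiLp.norm_single]
      simp [abs_of_pos (add_pos hC0 (div_pos hC0 hε))]
    have hXy := hC y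
    rw [hy, mul_one] at hXy
    linarith [hspike ▸ norm_sub_le (toEuclideanLin Z y) (toEuclideanLin X y)]
  have hbound := hsys.norm_mul_norm_sub_inner_smul_le hp hy
    (fun w hw => by rw [hZ, hw, mul_zero, zero_smul, add_zero]) hC
  have hmul := (mul_le_mul_of_nonneg_right hZy (norm_nonneg _)).trans hbound
  rw [div_mul_eq_mul_div, div_le_iff₀ hε] at hmul
  exact le_of_mul_le_mul_left hmul hC0

lemma blockCorrupt_add_vecMulVec_single (X : Matrix (Fin n) (Fin p) ℝ) (i : Fin n) (t : ℝ)
    {y : E p} {J : Finset (Fin p)} (hy : ∀ j ∉ J, y j = 0) :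
    BlockCorrupt X (X + vecMulVec (Pi.single i t) y.ofLp) 1 J.card := by
  refine ⟨{i}, J, Finset.card_singleton i, rfl, fun i' j hij => ?_⟩
  rcases hij with hi | hj
  · simp [vecMulVec_apply, Finset.mem_singleton.not.mp hi]
  · simp [vecMulVec_apply, hy j hj]

lemma exists_unit_mem_orthogonal_of_support (S : Submodule ℝ (E p)) {J : Finset (Fin p)}
    (h : Module.finrank ℝ S < J.card) : ∃ y ∈ Sᗮ, ‖y‖ = 1 ∧ ∀ j ∉ J, y j = 0 := by
  set e : J → E p := fun j => EuclideanSpace.single (j : Fin p) (1 : ℝ)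
  have he : LinearIndependent ℝ e :=
    (EuclideanSpace.orthonormal_single.comp _ Subtype.val_injective).linearIndependent
  have hW : Module.finrank ℝ (Submodule.span ℝ (Set.range e)) = J.card := by
    rw [finrank_span_eq_card he, Fintype.card_coe]
  obtain ⟨y, hyW, hyS, hy1⟩ := Submodule.exists_unit_mem_inf_orthogonal (hW.symm ▸ h)
  refine ⟨y, hyS, hy1, fun j hj => ?_⟩
  have hle : Submodule.span ℝ (Set.range e) ≤ (EuclideanSpace.proj j : E p →L[ℝ] ℝ).ker := by
    refine Submodule.span_le.mpr ?_
    rintro _ ⟨k, rfl⟩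
    have : (k : Fin p) ≠ j := fun hkj => hj (hkj ▸ k.2)
    simp [e, Ne.symm this]
  exact hle hyW

lemma canonAngle_le_pi_div_two {k : ℕ} (S T : Submodule ℝ (E k)) :
    canonAngle S T ≤ Real.pi / 2 :=
  Real.arccos_le_pi_div_two.mpr (Real.sInf_nonneg (by rintro _ ⟨w, -, -, rfl⟩; positivity))

lemma arccos_norm_starProjection_le_canonAngle {k : ℕ} (S : Submodule ℝ (E k))
    {T : Submodule ℝ (E k)} {x : E k} (hx : x ∈ T) (hx1 : ‖x‖ = 1) :
    Real.arccos ‖S.starProjection x‖ ≤ canonAngle S T :=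
  Real.arccos_le_arccos <| csInf_le ⟨0, by rintro _ ⟨w, -, -, rfl⟩; positivity⟩ ⟨x, hx, hx1, rfl⟩

lemma canonAngle_self {k : ℕ} {S : Submodule ℝ (E k)} (hS : S ≠ ⊥) : canonAngle S S = 0 := by
  obtain ⟨x, hx, hx0⟩ := Submodule.exists_mem_ne_zero_of_ne_bot hS
  refine le_antisymm ?_ (Real.arccos_nonneg _)
  rw [← Real.arccos_one]
  refine Real.arccos_le_arccos (le_csInf ⟨_, ‖x‖⁻¹ • x, S.smul_mem _ hx, ?_, rfl⟩ ?_)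
  · rw [norm_smul, norm_inv, norm_norm, inv_mul_cancel₀ (norm_ne_zero_iff.mpr hx0)]
  · rintro _ ⟨w, hw, hw1, rfl⟩
    rw [← S.starProjection_apply, S.starProjection_eq_self_iff.mpr hw, hw1]

lemma sSup_eq_pi_div_two_iff {α : Type*} (P : α → Prop) (θ : α → ℝ)
    (hθ : ∀ a, θ a ≤ Real.pi / 2) :
    sSup {d | ∃ a, P a ∧ d = θ a} = Real.pi / 2 ↔ ∀ c < Real.pi / 2, ∃ a, P a ∧ c < θ a := by
  constructor
  · intro h c hc
    have hne : {d | ∃ a, P a ∧ d = θ a}.Nonempty := by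
      by_contra hempty
      rw [Set.not_nonempty_iff_eq_empty.mp hempty, Real.sSup_empty] at h
      exact Real.pi_div_two_pos.ne h
    obtain ⟨_, ⟨a, ha, rfl⟩, hca⟩ := exists_lt_of_lt_csSup hne (h.symm ▸ hc)
    exact ⟨a, ha, hca⟩
  · intro h
    obtain ⟨a, ha, -⟩ := h 0 Real.pi_div_two_pos
    refine csSup_eq_of_forall_le_of_forall_lt_exists_gt ⟨_, a, ha, rfl⟩ ?_ fun c hc => ?_
    · rintro _ ⟨a, -, rfl⟩
      exact hθ a
    · obtain ⟨a, ha, hca⟩ := h c hc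
      exact ⟨_, ⟨a, ha, rfl⟩, hca⟩

section Breakdown

variable {V : Matrix (Fin n) (Fin p) ℝ → Submodule ℝ (E m)} {X : Matrix (Fin n) (Fin p) ℝ}

lemma breaksDownBlock_iff {k l : ℕ} : BreaksDownBlock V X k l ↔
    ∀ c < Real.pi / 2, ∃ Z, BlockCorrupt X Z k l ∧ c < canonAngle (V Z) (V X) :=
  sSup_eq_pi_div_two_iff _ _ fun _ => canonAngle_le_pi_div_two _ _

lemma breaksDownRow_iff {k : ℕ} : BreaksDownRow V X k ↔
    ∀ c < Real.pi / 2, ∃ Z, RowCorrupt X Z k ∧ c < canonAngle (V Z) (V X) :=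
  sSup_eq_pi_div_two_iff _ _ fun _ => canonAngle_le_pi_div_two _ _

lemma breaksDownCol_iff {l : ℕ} : BreaksDownCol V X l ↔
    ∀ c < Real.pi / 2, ∃ Z, ColCorrupt X Z l ∧ c < canonAngle (V Z) (V X) :=
  sSup_eq_pi_div_two_iff _ _ fun _ => canonAngle_le_pi_div_two _ _

lemma BlockCorrupt.mono {Z : Matrix (Fin n) (Fin p) ℝ} {k l k' l' : ℕ}
    (h : BlockCorrupt X Z k l) (hk : k ≤ k') (hk' : k' ≤ n) (hl : l ≤ l') (hl' : l' ≤ p) :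
    BlockCorrupt X Z k' l' := by
  obtain ⟨I, J, rfl, rfl, hout⟩ := h
  obtain ⟨I', hII', -, hI'⟩ := Finset.exists_subsuperset_card_eq (Finset.subset_univ I) hk
    (by simpa using hk')
  obtain ⟨J', hJJ', -, hJ'⟩ := Finset.exists_subsuperset_card_eq (Finset.subset_univ J) hl
    (by simpa using hl')
  exact ⟨I', J', hI', hJ', fun i j hij => hout i j (hij.imp (mt (@hII' i)) (mt (@hJJ' j)))⟩

lemma BlockCorrupt.rowCorrupt {Z : Matrix (Fin n) (Fin p) ℝ} {k l : ℕ}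
    (h : BlockCorrupt X Z k l) : RowCorrupt X Z k := by
  obtain ⟨I, J, hI, -, hout⟩ := h
  exact ⟨I, hI, fun i hi j => hout i j (Or.inl hi)⟩

lemma BlockCorrupt.colCorrupt {Z : Matrix (Fin n) (Fin p) ℝ} {k l : ℕ}
    (h : BlockCorrupt X Z k l) : ColCorrupt X Z l := by
  obtain ⟨I, J, -, hJ, hout⟩ := h
  exact ⟨J, hJ, fun j hj i => hout i j (Or.inr hj)⟩

lemma BreaksDownBlock.mono {k l k' l' : ℕ} (h : BreaksDownBlock V X k l) (hk : k ≤ k')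
    (hk' : k' ≤ n) (hl : l ≤ l') (hl' : l' ≤ p) : BreaksDownBlock V X k' l' := by
  rw [breaksDownBlock_iff] at h ⊢
  intro c hc
  obtain ⟨Z, hZ, hcZ⟩ := h c hc
  exact ⟨Z, hZ.mono hk hk' hl hl', hcZ⟩

lemma BreaksDownBlock.breaksDownRow {k l : ℕ} (h : BreaksDownBlock V X k l) :
    BreaksDownRow V X k := by
  rw [breaksDownBlock_iff] at h
  rw [breaksDownRow_iff]
  intro c hc
  obtain ⟨Z, hZ, hcZ⟩ := h c hc
  exact ⟨Z, hZ.rowCorrupt, hcZ⟩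

lemma BreaksDownBlock.breaksDownCol {k l : ℕ} (h : BreaksDownBlock V X k l) :
    BreaksDownCol V X l := by
  rw [breaksDownBlock_iff] at h
  rw [breaksDownCol_iff]
  intro c hc
  obtain ⟨Z, hZ, hcZ⟩ := h c hc
  exact ⟨Z, hZ.colCorrupt, hcZ⟩

lemma not_breaksDownBlock_zero_right (hX : V X ≠ ⊥) (k : ℕ) : ¬ BreaksDownBlock V X k 0 := by
  rw [breaksDownBlock_iff]
  intro h
  obtain ⟨Z, ⟨I, J, -, hJ, hout⟩, hpos⟩ := h 0 Real.pi_div_two_pos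
  have hZX : Z = X := Matrix.ext fun i j => hout i j (Or.inr (by simp [Finset.card_eq_zero.mp hJ]))
  rw [hZX, canonAngle_self hX] at hpos
  exact lt_irrefl 0 hpos

lemma exists_isBP_one_le {L : ℕ} (hn : 1 ≤ n) (hLp : L ≤ p) (hL : BreaksDownBlock V X 1 L)
    (h0 : ¬ BreaksDownBlock V X 1 0) : ∃ l ≤ L, IsBP V X 1 l := by
  classical
  have hex : ∃ l, BreaksDownBlock V X 1 l := ⟨L, hL⟩
  have hl := Nat.find_spec hex
  have hlL : Nat.find hex ≤ L := Nat.find_min' hex hL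
  have hl0 : Nat.find hex ≠ 0 := fun h => h0 (h ▸ hl)
  refine ⟨Nat.find hex, hlL, le_rfl, hn, Nat.one_le_iff_ne_zero.mpr hl0, hlL.trans hLp,
    fun k l hk hkn hl' hlp => hl.mono hk hkn hl' hlp, fun k l hk1 _ hk hl' hne => ?_⟩
  obtain rfl : k = 1 := le_antisymm hk hk1
  exact Nat.find_min hex (lt_of_le_of_ne hl' fun h => hne (by rw [h]))

lemma bpRow_eq_one {l : ℕ} (hn : 1 ≤ n) (h : BreaksDownBlock V X 1 l) : bpRow V X = 1 := by
  have hmem : 1 ∈ {k | 1 ≤ k ∧ k ≤ n ∧ BreaksDownRow V X k} := ⟨le_rfl, hn, h.breaksDownRow⟩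
  exact le_antisymm (Nat.sInf_le hmem) (Nat.sInf_mem ⟨1, hmem⟩).1

lemma bpCol_le {k l : ℕ} (hl : 1 ≤ l) (hlp : l ≤ p) (h : BreaksDownBlock V X k l) :
    bpCol V X ≤ l :=
  Nat.sInf_le ⟨hl, hlp, h.breaksDownCol⟩

end Breakdown

section SingularSubspace

variable {R : ℕ} {V : Matrix (Fin n) (Fin p) ℝ → Submodule ℝ (E p)}

lemma exists_blockCorrupt_norm_starProjection_le (hn : 0 < n) (hR : 0 < R) (hRp : R < p)
    (hV : ∀ Y, IsRightSingularSubspace Y R (V Y)) (X : Matrix (Fin n) (Fin p) ℝ) {ε : ℝ}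
    (hε : 0 < ε) :
    ∃ Z, BlockCorrupt X Z 1 (R + 1) ∧ ∃ x ∈ V X, ‖x‖ = 1 ∧ ‖(V Z).starProjection x‖ ≤ ε := by
  have hp : 0 < p := hR.trans hRp
  obtain ⟨J, -, hJ⟩ := Finset.exists_subset_card_eq (s := (Finset.univ : Finset (Fin p)))
    (n := R + 1) (by rw [Finset.card_univ, Fintype.card_fin]; exact hRp)
  have hdimX := (hV X).finrank_eq hRp.le
  obtain ⟨y, hyX, hy1, hyJ⟩ := exists_unit_mem_orthogonal_of_support (V X) (J := J)
    (by omega)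
  obtain ⟨C, hC0, hC⟩ := (LinearMap.toContinuousLinearMap (toEuclideanLin X)).bound
  replace hC : ∀ x, ‖toEuclideanLin X x‖ ≤ C * ‖x‖ := hC
  set Z := X + vecMulVec (Pi.single ⟨0, hn⟩ (C + C / ε)) y.ofLp
  refine ⟨Z, hJ ▸ blockCorrupt_add_vecMulVec_single X _ _ hyJ, ?_⟩
  obtain ⟨v, σ, hsys, hVZ⟩ := hV Z
  set u := v ⟨0, hp⟩
  have hu := hsys.norm_sub_inner_smul_le_of_add_vecMulVec hp hy1 hC0 hC hε
  have huX : ‖(V X).starProjection u‖ ≤ ε := by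
    have hproj : (V X).starProjection u = (V X).starProjection (u - ⟪y, u⟫ • y) := by
      rw [map_sub, map_smul, (V X).starProjection_apply_eq_zero_iff.mpr hyX, smul_zero, sub_zero]
    exact hproj ▸ ((V X).norm_starProjection_apply_le _).trans hu
  have huZ : u ∈ V Z := hVZ ▸ Submodule.subset_span ⟨⟨0, hp⟩, hR, rfl⟩
  obtain ⟨x, hxX, hx1, hx⟩ := Submodule.exists_unit_norm_starProjection_le
    (((hV Z).finrank_eq hRp.le).trans hdimX.symm).le huZ (hsys.1.1 _)
  exact ⟨x, hxX, hx1, hx.trans huX⟩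

lemma breaksDownBlock_one_succ (hn : 0 < n) (hR : 0 < R) (hRp : R < p)
    (hV : ∀ Y, IsRightSingularSubspace Y R (V Y)) (X : Matrix (Fin n) (Fin p) ℝ) :
    BreaksDownBlock V X 1 (R + 1) := by
  rw [breaksDownBlock_iff]
  intro c hc
  have hev : ∀ᶠ ε in 𝓝 0, c < Real.arccos ε :=
    (Real.continuous_arccos.tendsto 0).eventually_const_lt
      (show c < Real.arccos 0 by rwa [Real.arccos_zero])
  obtain ⟨ε, hcε, hε⟩ := (hev.filter_mono nhdsWithin_le_nhds |>.and self_mem_nhdsWithin).exists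
    (f := 𝓝[>] 0)
  obtain ⟨Z, hZ, x, hxX, hx1, hx⟩ := exists_blockCorrupt_norm_starProjection_le hn hR hRp hV X hε
  exact ⟨Z, hZ, hcε.trans_le ((Real.arccos_le_arccos hx).trans
    (arccos_norm_starProjection_le_canonAngle _ hxX hx1))⟩

end SingularSubspace

/-- for the right singular subspace function `V_R` of the standard SVD
(any fixed selection), there is `l ≤ R+1` with `(1,l) ∈ BP(V_R;X)`; in particular
`bp_row(V_R;X) = 1` and `bp_col(V_R;X) ≤ R+1`. -/
theorem stmt5 {n p : ℕ} (R : ℕ) (hR1 : 1 ≤ R) (hRmin : R ≤ min n p) (hRp : R < p)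
    (V : Matrix (Fin n) (Fin p) ℝ → Submodule ℝ (E p))
    (hV : ∀ Y, IsRightSingularSubspace Y R (V Y))
    (X : Matrix (Fin n) (Fin p) ℝ) :
    (∃ l ≤ R + 1, IsBP V X 1 l) ∧
    bpRow V X = 1 ∧ bpCol V X ≤ R + 1 := by
  have hn : 1 ≤ n := hR1.trans (hRmin.trans (min_le_left n p))
  have hbreak := breaksDownBlock_one_succ hn hR1 hRp hV X
  have hVX : V X ≠ ⊥ := by
    rw [Ne, ← Submodule.finrank_eq_zero, (hV X).finrank_eq hRp.le]
    omega
  exact ⟨exists_isBP_one_le hn hRp hbreak (not_breaksDownBlock_zero_right hVX 1),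
    bpRow_eq_one hn hbreak, bpCol_le (Nat.le_add_left 1 R) hRp hbreak⟩
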